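/- Let λ be a regular uncountable cardinal and let c : [λ]² → 2 be a coloring such that: (i) there exist functions d_α : 𝒫_fin(α) → ω for α < λ with the property that whenever (s_i)_{i∈I} is a family of finite 1-homogeneous subsets of α with d_α constant on the family, ⋃_i s_i is 1-homogeneous; and (ii) for every u ∈ [λ]^{<ω}, the set {η < λ : c({ξ,η}) = 1 for all ξ ∈ u} is unbounded in λ. Let Q := {u ∈ [λ]^{<ω} : u is 1-homogeneous}, ordered by reverse inclusion. Then: (a) Q is the increasing union of λ many centered subsets, namely Q^α := Q ∩ [α]^{<ω} is centered via d_α; (b) for each α < λ the set D_α := {u ∈ Q : u ⊄ α} is open dense in Q; (c) if additionally there is no 1-homogeneous subset of λ of size λ, then no filter on Q meets all D_α (α < λ). -/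

import Mathlib

open Cardinal

def DenseIn {α : Type*} (le : α → α → Prop) (D : Set α) : Prop :=
  ∀ p, ∃ d ∈ D, le d p

def IsFilterIn {α : Type*} (le : α → α → Prop) (G : Set α) : Prop :=
  G.Nonempty ∧ (∀ p ∈ G, ∀ q, le p q → q ∈ G) ∧
    ∀ p ∈ G, ∀ q ∈ G, ∃ r ∈ G, le r p ∧ le r q

/-- `S` is 1-homogeneous with respect to the (total) coloring `c`. -/
def HomogS (c : Ordinal → Ordinal → Fin 2) (S : Set Ordinal) : Prop :=
  ∀ x ∈ S, ∀ y ∈ S, x ≠ y → c x y = 1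

/-- The poset `Q` of finite 1-homogeneous subsets of λ, ordered by ⊇. -/
def QH (lam : Cardinal) (c : Ordinal → Ordinal → Fin 2) :=
  {u : Finset Ordinal // (∀ x ∈ u, x < lam.ord) ∧ HomogS c ↑u}

def qhLe {lam : Cardinal} {c : Ordinal → Ordinal → Fin 2}
    (q p : QH lam c) : Prop := p.1 ⊆ q.1

/-! Since λ is regular, every set of fewer than λ ordinals below λ is bounded below λ, finite
sets included. For (a) this bounds each condition, and the union of a family on which `d_α` is
constant is homogeneous by (i), hence a common extension. For (b), (ii) supplies a point above
`α` that can be added to any condition. For (c), the union of a filter is homogeneous because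
any two conditions of the filter have a common extension, and it is unbounded in λ when the
filter meets every `D_α`; by regularity it then has size λ. -/

theorem Cardinal.IsRegular.exists_lt_ord_forall_lt_of_mk_lt {lam : Cardinal.{u}}
    (hreg : lam.IsRegular) {S : Set Ordinal.{u}} (hS : ∀ x ∈ S, x < lam.ord)
    (hcard : #S < Cardinal.lift.{u + 1} lam) : ∃ α < lam.ord, ∀ x ∈ S, x < α := by
  have hcof : (Ordinal.lift.{u + 1} lam.ord).cof = Cardinal.lift.{u + 1} lam := by
    rw [← Ordinal.lift_cof, hreg.cof_ord]
  refine ⟨sSup ((· + 1) '' S), Ordinal.sSup_add_one_lt_of_lt_cof (hcof ▸ hcard) hS,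
    fun x hx => (lt_add_one x).trans_le (le_csSup ?_ ⟨x, hx, rfl⟩)⟩
  exact ⟨lam.ord, by rintro _ ⟨y, hy, rfl⟩; exact Order.add_one_le_of_lt (hS y hy)⟩

theorem Cardinal.IsRegular.mk_eq_lift_of_unbounded {lam : Cardinal.{u}}
    (hreg : lam.IsRegular) {S : Set Ordinal.{u}} (hS : S ⊆ Set.Iio lam.ord)
    (hunb : ∀ α < lam.ord, ∃ x ∈ S, α ≤ x) : #S = Cardinal.lift.{u + 1} lam := by
  have hle : #S ≤ Cardinal.lift.{u + 1} lam := by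
    simpa using Cardinal.mk_le_mk_of_subset hS
  refine hle.eq_of_not_lt fun hlt => ?_
  obtain ⟨α, hα, hbound⟩ := hreg.exists_lt_ord_forall_lt_of_mk_lt hS hlt
  obtain ⟨x, hx, hαx⟩ := hunb α hα
  exact (hbound x hx).not_ge hαx

theorem HomogS.insert {c : Ordinal → Ordinal → Fin 2} (hsymm : ∀ x y, c x y = c y x)
    {S : Set Ordinal} (hS : HomogS c S) {e : Ordinal} (he : ∀ ξ ∈ S, c ξ e = 1) :
    HomogS c (insert e S) := by
  rintro x (rfl | hx) y (rfl | hy) hxy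
  · exact absurd rfl hxy
  · rw [hsymm]; exact he y hy
  · exact he x hx
  · exact hS x hx y hy hxy

-- Hypothesis (i) at a single `α`, with `f = d_α`.
def IsCentering (c : Ordinal → Ordinal → Fin 2) (α : Ordinal) (f : Finset Ordinal → ℕ) : Prop :=
  ∀ (I : Type) (s : I → Finset Ordinal), (∀ i, ∀ x ∈ s i, x < α) →
    (∀ i, HomogS c ↑(s i)) → (∀ i j, f (s i) = f (s j)) → HomogS c (⋃ i, ↑(s i))

namespace QH

variable {lam : Cardinal} {c : Ordinal → Ordinal → Fin 2}

theorem exists_lt_ord_forall_lt (hreg : lam.IsRegular) (q : QH lam c) :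
    ∃ α < lam.ord, ∀ x ∈ q.1, x < α :=
  hreg.exists_lt_ord_forall_lt_of_mk_lt q.2.1 <|
    (Cardinal.lt_aleph0_of_finite _).trans_le (Cardinal.aleph0_le_lift.2 hreg.aleph0_le)

theorem exists_le_of_isCentering {α : Ordinal} {f : Finset Ordinal → ℕ}
    (hf : IsCentering c α f) (s : Finset (QH lam c)) (hs : ∀ q ∈ s, ∀ x ∈ q.1, x < α)
    (hconst : ∀ q ∈ s, ∀ q' ∈ s, f q.1 = f q'.1) : ∃ r : QH lam c, ∀ q ∈ s, qhLe r q := by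
  -- `hf` quantifies over index types in `Type`, while `s` lives in `Type 1`.
  let e := (equivShrink.{0} s).symm
  let g : Shrink.{0} s → Finset Ordinal := fun i => (e i).1.1
  let u : Finset Ordinal := s.biUnion fun q : QH lam c => q.1
  have hunion : (⋃ i, (g i : Set Ordinal)) = ↑u := by
    ext x
    simp only [Set.mem_iUnion, Finset.mem_coe, u, g, Finset.mem_biUnion]
    exact ⟨fun ⟨i, hi⟩ => ⟨_, (e i).2, hi⟩,
      fun ⟨q, hq, hxq⟩ => ⟨e.symm ⟨q, hq⟩, by rwa [e.apply_symm_apply]⟩⟩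
  have hhomog : HomogS c ↑u := hunion ▸
    hf _ g (fun i => hs _ (e i).2) (fun i => (e i).1.2.2)
      (fun i j => hconst _ (e i).2 _ (e j).2)
  refine ⟨⟨u, fun x hx => ?_, hhomog⟩, fun q hq => Finset.subset_biUnion_of_mem _ hq⟩
  obtain ⟨q, -, hxq⟩ := Finset.mem_biUnion.1 hx
  exact q.2.1 x hxq

theorem exists_le_not_subset (hsymm : ∀ x y, c x y = c y x)
    (hunb : ∀ u : Finset Ordinal, (∀ x ∈ u, x < lam.ord) →
      ∀ β < lam.ord, ∃ e, β ≤ e ∧ e < lam.ord ∧ ∀ ξ ∈ u, c ξ e = 1)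
    {α : Ordinal} (hα : α < lam.ord) (p : QH lam c) :
    ∃ q : QH lam c, (¬ ∀ x ∈ q.1, x < α) ∧ qhLe q p := by
  obtain ⟨e, hαe, he, hce⟩ := hunb p.1 p.2.1 α hα
  refine ⟨⟨insert e p.1, Finset.forall_mem_insert _ _ _ |>.2 ⟨he, p.2.1⟩, ?_⟩,
    fun h => (h e (Finset.mem_insert_self _ _)).not_ge hαe, Finset.subset_insert _ _⟩
  rw [Finset.coe_insert]
  exact p.2.2.insert hsymm hce

theorem homogS_biUnion_of_isFilterIn {G : Set (QH lam c)} (hG : IsFilterIn qhLe G) :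
    HomogS c (⋃ q ∈ G, ↑q.1) := by
  simp only [HomogS, Set.mem_iUnion, Finset.mem_coe]
  rintro x ⟨p, hp, hxp⟩ y ⟨q, hq, hyq⟩ hxy
  obtain ⟨r, -, hrp, hrq⟩ := hG.2.2 p hp q hq
  exact r.2.2 x (hrp hxp) y (hrq hyq) hxy

end QH

theorem stmt12_general (lam : Cardinal) (hreg : lam.IsRegular)
    (c : Ordinal → Ordinal → Fin 2) (hsymm : ∀ x y, c x y = c y x)
    (d : Ordinal → Finset Ordinal → ℕ)
    (hi : ∀ α < lam.ord, ∀ (I : Type) (s : I → Finset Ordinal),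
      (∀ i, ∀ x ∈ s i, x < α) → (∀ i, HomogS c ↑(s i)) →
      (∀ i j, d α (s i) = d α (s j)) → HomogS c (⋃ i, ↑(s i)))
    (hii : ∀ u : Finset Ordinal, (∀ x ∈ u, x < lam.ord) →
      ∀ β < lam.ord, ∃ e, β ≤ e ∧ e < lam.ord ∧ ∀ ξ ∈ u, c ξ e = 1) :
    -- (a) Q is the increasing union of λ many centered pieces Q^α,
    --     each centered via the function d_α:
    ((∀ q : QH lam c, ∃ α < lam.ord, ∀ x ∈ q.1, x < α) ∧
     (∀ α < lam.ord, ∀ s : Finset (QH lam c),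
        (∀ q ∈ s, ∀ x ∈ q.1, x < α) →
        (∀ q ∈ s, ∀ q' ∈ s, d α q.1 = d α q'.1) →
        ∃ r : QH lam c, ∀ q ∈ s, qhLe r q)) ∧
    -- (b) each D_α = {u ∈ Q : u ⊄ α} is open dense:
    (∀ α < lam.ord,
      DenseIn (qhLe (lam := lam) (c := c)) {q : QH lam c | ¬ ∀ x ∈ q.1, x < α} ∧
      (∀ q : QH lam c, (¬ ∀ x ∈ q.1, x < α) → ∀ r, qhLe r q → ¬ ∀ x ∈ r.1, x < α)) ∧
    -- (c) if there is no 1-homogeneous subset of λ of size λ, then no filter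
    --     meets all the D_α:
    ((¬ ∃ S : Set Ordinal, S ⊆ Set.Iio lam.ord ∧ #S = Cardinal.lift.{1,0} lam ∧
        HomogS c S) →
      ¬ ∃ G : Set (QH lam c), IsFilterIn (qhLe (lam := lam) (c := c)) G ∧
        ∀ α < lam.ord, ∃ q ∈ G, ¬ ∀ x ∈ q.1, x < α) := by
  refine ⟨⟨QH.exists_lt_ord_forall_lt hreg, fun α hα => QH.exists_le_of_isCentering (hi α hα)⟩,
    fun α hα => ⟨QH.exists_le_not_subset hsymm hii hα,
      fun q hq r hrq hr => hq fun x hx => hr x (hrq hx)⟩, ?_⟩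
  rintro hno ⟨G, hG, hmeets⟩
  have hsub : (⋃ q ∈ G, ↑q.1) ⊆ Set.Iio lam.ord := by
    simp only [Set.iUnion_subset_iff]
    exact fun q _ x hx => q.2.1 x hx
  have hunb : ∀ α < lam.ord, ∃ x ∈ ⋃ q ∈ G, (q.1 : Set Ordinal), α ≤ x := by
    intro α hα
    obtain ⟨q, hqG, hq⟩ := hmeets α hα
    push Not at hq
    obtain ⟨x, hxq, hαx⟩ := hq
    exact ⟨x, Set.mem_biUnion hqG hxq, hαx⟩
  exact hno ⟨_, hsub, hreg.mk_eq_lift_of_unbounded hsub hunb, QH.homogS_biUnion_of_isFilterIn hG⟩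

theorem stmt12 (lam : Cardinal) (hreg : lam.IsRegular) (hunc : ℵ₀ < lam)
    (c : Ordinal → Ordinal → Fin 2) (hsymm : ∀ x y, c x y = c y x)
    (d : Ordinal → Finset Ordinal → ℕ)
    (hi : ∀ α < lam.ord, ∀ (I : Type) (s : I → Finset Ordinal),
      (∀ i, ∀ x ∈ s i, x < α) → (∀ i, HomogS c ↑(s i)) →
      (∀ i j, d α (s i) = d α (s j)) → HomogS c (⋃ i, ↑(s i)))
    (hii : ∀ u : Finset Ordinal, (∀ x ∈ u, x < lam.ord) →
      ∀ β < lam.ord, ∃ e, β ≤ e ∧ e < lam.ord ∧ ∀ ξ ∈ u, c ξ e = 1) :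
    -- (a) Q is the increasing union of λ many centered pieces Q^α,
    --     each centered via the function d_α:
    ((∀ q : QH lam c, ∃ α < lam.ord, ∀ x ∈ q.1, x < α) ∧
     (∀ α < lam.ord, ∀ s : Finset (QH lam c),
        (∀ q ∈ s, ∀ x ∈ q.1, x < α) →
        (∀ q ∈ s, ∀ q' ∈ s, d α q.1 = d α q'.1) →
        ∃ r : QH lam c, ∀ q ∈ s, qhLe r q)) ∧
    -- (b) each D_α = {u ∈ Q : u ⊄ α} is open dense:
    (∀ α < lam.ord,
      DenseIn (qhLe (lam := lam) (c := c)) {q : QH lam c | ¬ ∀ x ∈ q.1, x < α} ∧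
      (∀ q : QH lam c, (¬ ∀ x ∈ q.1, x < α) → ∀ r, qhLe r q → ¬ ∀ x ∈ r.1, x < α)) ∧
    -- (c) if there is no 1-homogeneous subset of λ of size λ, then no filter
    --     meets all the D_α:
    ((¬ ∃ S : Set Ordinal, S ⊆ Set.Iio lam.ord ∧ #S = Cardinal.lift.{1,0} lam ∧
        HomogS c S) →
      ¬ ∃ G : Set (QH lam c), IsFilterIn (qhLe (lam := lam) (c := c)) G ∧
        ∀ α < lam.ord, ∃ q ∈ G, ¬ ∀ x ∈ q.1, x < α) :=
  stmt12_general lam hreg c hsymm d hi hii
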